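/- arXiv:2512.16533 — 2 statements merged into one kernel-verified Lean document; each statement's English description precedes it below -/
import Mathlib

section
/- If f : ℝ^d → ℝ is differentiable and satisfies the (τ,μ)-strong quasar convexity inequality f* ≥ f(x) + (1/τ)⟨∇f(x), x* - x⟩ + (μ/2)‖x - x*‖² for all x (where x* is a minimizer, f* = f(x*), τ ∈ (0,1], μ > 0), then f satisfies the quadratic growth condition f(x) - f* ≥ (μτ/(2(2-τ)))‖x - x*‖² for all x. -/
/-!
Along the ray `u t = f (x* + t • v) - f x*`, `v = x - x*`, strong quasar convexity reads
`τ u t + (τ μ / 2) ‖v‖² t² ≤ t u' t`. For `φ t = u t - C t²` with `C = μ τ ‖v‖² / (2 (2 - τ))`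
this becomes `τ φ ≤ t φ'`, so `t ↦ t ^ (-τ) φ t` is nondecreasing on `(0, ∞)`. Since `x*` is a
minimizer, `φ 0 = φ' 0 = 0`, and as `τ ≤ 1` this forces `t ^ (-τ) φ t → 0` as `t → 0⁺`.
Hence `φ 1 ≥ 0`, which is the quadratic growth bound.
-/

open Filter Set Topology

theorem tendsto_rpow_neg_mul_nhdsGT_zero {u : ℝ → ℝ} {τ : ℝ} (hτ : τ ≤ 1) (hu0 : u 0 = 0)
    (hu : HasDerivAt u 0 0) : Tendsto (fun t => t ^ (-τ) * u t) (𝓝[>] 0) (𝓝 0) := by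
  have hslope : Tendsto (fun t => t⁻¹ * u t) (𝓝[>] 0) (𝓝 0) :=
    ((hasDerivAt_iff_tendsto_slope.1 hu).mono_left (nhdsGT_le_nhdsNE 0)).congr fun t => by
      simp [slope, hu0]
  refine squeeze_zero_norm' ?_ (by simpa using hslope.norm)
  filter_upwards [Ioc_mem_nhdsGT zero_lt_one] with t ⟨ht0, ht1⟩
  rw [norm_mul, Real.norm_of_nonneg (Real.rpow_nonneg ht0.le _), Real.norm_eq_abs,
    abs_of_pos ht0, ← Real.rpow_neg_one]
  exact mul_le_mul_of_nonneg_right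
    (Real.rpow_le_rpow_of_exponent_ge ht0 ht1 (by linarith)) (abs_nonneg _)

theorem monotoneOn_rpow_neg_mul {φ φ' : ℝ → ℝ} {τ : ℝ}
    (hφ : ∀ t > 0, HasDerivAt φ (φ' t) t) (h : ∀ t > 0, τ * φ t ≤ t * φ' t) :
    MonotoneOn (fun t => t ^ (-τ) * φ t) (Ioi 0) := by
  have hderiv : ∀ t > 0, HasDerivAt (fun t => t ^ (-τ) * φ t)
      (t ^ (-τ - 1) * (t * φ' t - τ * φ t)) t := fun t ht =>
    ((Real.hasDerivAt_rpow_const (Or.inl ht.ne')).mul (hφ t ht)).congr_deriv <| by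
      rw [← sub_add_cancel (-τ) 1, Real.rpow_add_one ht.ne', add_sub_cancel_right]
      ring
  refine monotoneOn_of_hasDerivWithinAt_nonneg (convex_Ioi 0)
    (f' := fun t => t ^ (-τ - 1) * (t * φ' t - τ * φ t))
    (fun t ht => (hderiv t ht).continuousAt.continuousWithinAt) (fun t ht => ?_) fun t ht => ?_
  · rw [interior_Ioi] at ht ⊢
    exact (hderiv t ht).hasDerivWithinAt
  · rw [interior_Ioi] at ht
    exact mul_nonneg (Real.rpow_nonneg ht.le _) (sub_nonneg.2 (h t ht))

theorem nonneg_of_mul_le_mul_deriv {φ φ' : ℝ → ℝ} {τ : ℝ} (hτ : τ ≤ 1) (hφ0 : φ 0 = 0)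
    (hφ'0 : HasDerivAt φ 0 0) (hφ : ∀ t > 0, HasDerivAt φ (φ' t) t)
    (h : ∀ t > 0, τ * φ t ≤ t * φ' t) {t : ℝ} (ht : 0 < t) : 0 ≤ φ t := by
  have hmono := monotoneOn_rpow_neg_mul hφ h
  have : 0 ≤ t ^ (-τ) * φ t := by
    refine le_of_tendsto (tendsto_rpow_neg_mul_nhdsGT_zero hτ hφ0 hφ'0) ?_
    filter_upwards [Ioc_mem_nhdsGT ht] with s hs
    exact hmono hs.1 ht hs.2
  exact nonneg_of_mul_nonneg_right this (Real.rpow_pos_of_pos ht _)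

section InnerProductSpace

variable {E : Type*} [NormedAddCommGroup E] [InnerProductSpace ℝ E]

theorem HasGradientAt.hasDerivAt_comp_add_smul [CompleteSpace E] {f : E → ℝ} {g x v : E}
    {t : ℝ} (h : HasGradientAt f g (x + t • v)) :
    HasDerivAt (fun s : ℝ => f (x + s • v)) (inner ℝ g v) t := by
  have := h.hasFDerivAt.comp_hasDerivAt t (((hasDerivAt_id t).smul_const v).const_add x)
  simp only [id_eq, one_smul, InnerProductSpace.toDual_apply_apply] at this
  exact this

def StrongQuasarConvex (f : E → ℝ) (g : E → E) (τ μ : ℝ) (xstar : E) : Prop :=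
  ∀ x, f x + (1 / τ) * inner ℝ (g x) (xstar - x) + μ / 2 * ‖x - xstar‖ ^ 2 ≤ f xstar

theorem StrongQuasarConvex.mul_sub_add_le_mul_inner {f : E → ℝ} {g : E → E} {τ μ : ℝ}
    {xstar : E} (h : StrongQuasarConvex f g τ μ xstar) (hτ : 0 < τ) (v : E) (t : ℝ) :
    τ * (f (xstar + t • v) - f xstar) + τ * μ / 2 * ‖v‖ ^ 2 * t ^ 2 ≤
      t * inner ℝ (g (xstar + t • v)) v := by
  have := mul_le_mul_of_nonneg_left (h (xstar + t • v)) hτ.le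
  rw [sub_add_cancel_left, add_sub_cancel_left, inner_neg_right, real_inner_smul_right,
    norm_smul, mul_pow, Real.norm_eq_abs, sq_abs] at this
  field_simp at this
  linarith

theorem StrongQuasarConvex.quadratic_growth [CompleteSpace E] {f : E → ℝ} {g : E → E}
    (hgrad : ∀ x, HasGradientAt f (g x) x) {τ μ : ℝ} (hτ0 : 0 < τ) (hτ1 : τ ≤ 1) {xstar : E}
    (hmin : ∀ y, f xstar ≤ f y) (hsqc : StrongQuasarConvex f g τ μ xstar) (x : E) :
    μ * τ / (2 * (2 - τ)) * ‖x - xstar‖ ^ 2 ≤ f x - f xstar := by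
  set v := x - xstar
  set C := μ * τ / (2 * (2 - τ)) * ‖v‖ ^ 2
  have hray (t : ℝ) :
      HasDerivAt (fun s : ℝ => f (xstar + s • v)) (inner ℝ (g (xstar + t • v)) v) t :=
    (hgrad _).hasDerivAt_comp_add_smul
  have hcrit : inner ℝ (g (xstar + (0 : ℝ) • v)) v = 0 :=
    IsLocalMin.hasDerivAt_eq_zero (Eventually.of_forall fun t => by simpa using hmin _) (hray 0)
  have hC : (2 - τ) * C = τ * μ / 2 * ‖v‖ ^ 2 := by
    have : 2 - τ ≠ 0 := by linarith
    simp only [C]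
    field_simp
  have key := nonneg_of_mul_le_mul_deriv (φ := fun t => f (xstar + t • v) - f xstar - C * t ^ 2)
    (φ' := fun t => inner ℝ (g (xstar + t • v)) v - C * (2 * t)) hτ1 (by simp)
    ((((hray 0).sub_const (f xstar)).sub ((hasDerivAt_pow 2 0).const_mul C)).congr_deriv
      (by simpa using hcrit))
    (fun t _ => (((hray t).sub_const (f xstar)).sub ((hasDerivAt_pow 2 t).const_mul C)).congr_deriv
      (by norm_num))
    (fun t _ => by linear_combination hsqc.mul_sub_add_le_mul_inner hτ0 v t + t ^ 2 * hC)
    one_pos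
  simp only [one_smul, v, add_sub_cancel] at key
  linarith

end InnerProductSpace

theorem sqc_implies_quadratic_growth_general {d : ℕ}
    (f : EuclideanSpace ℝ (Fin d) → ℝ)
    (g : EuclideanSpace ℝ (Fin d) → EuclideanSpace ℝ (Fin d))
    (hgrad : ∀ x, HasGradientAt f (g x) x)
    (τ μ : ℝ) (hτ0 : 0 < τ) (hτ1 : τ ≤ 1)
    (xstar : EuclideanSpace ℝ (Fin d))
    (hmin : ∀ y, f xstar ≤ f y)
    (hsqc : ∀ x, f xstar ≥
      f x + (1 / τ) * inner ℝ (g x) (xstar - x) + μ / 2 * ‖x - xstar‖ ^ 2) :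
    ∀ x, f x - f xstar ≥ μ * τ / (2 * (2 - τ)) * ‖x - xstar‖ ^ 2 :=
  StrongQuasarConvex.quadratic_growth hgrad hτ0 hτ1 hmin hsqc

/-- Strong quasar convexity implies quadratic growth:
`f(x) - f* ≥ (μτ/(2(2-τ)))‖x - x*‖²`. -/
theorem sqc_implies_quadratic_growth {d : ℕ}
    (f : EuclideanSpace ℝ (Fin d) → ℝ)
    (g : EuclideanSpace ℝ (Fin d) → EuclideanSpace ℝ (Fin d))
    (hgrad : ∀ x, HasGradientAt f (g x) x)
    (τ μ : ℝ) (hτ0 : 0 < τ) (hτ1 : τ ≤ 1) (hμ : 0 < μ)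
    (xstar : EuclideanSpace ℝ (Fin d))
    (hmin : ∀ y, f xstar ≤ f y)
    (hsqc : ∀ x, f xstar ≥
      f x + (1 / τ) * inner ℝ (g x) (xstar - x) + μ / 2 * ‖x - xstar‖ ^ 2) :
    ∀ x, f x - f xstar ≥ μ * τ / (2 * (2 - τ)) * ‖x - xstar‖ ^ 2 :=
  sqc_implies_quadratic_growth_general f g hgrad τ μ hτ0 hτ1 xstar hmin hsqc
end

section
/- Let F : [a,b] → ℝ be continuous and suppose F is differentiable with F'(x) = f(x) for all x ∈ [a,b] except on a countable set. Then f is Henstock–Kurzweil integrable on [a,b] and F(b) = F(a) + ∫_a^b f (in the Henstock–Kurzweil sense). -/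
/-!
At a point `x` where `F' = f`, a small gauge makes `f x (v - u)` approximate `F v - F u` up to
`η (v - u)` on every subinterval `[u, v] ∋ x`, and these errors add up to at most `η (b - a)`.
The exceptional points are enumerated as `x_0, x_1, …`; at `x_k` continuity of `F` lets the gauge
make the error of a whole subinterval smaller than `ε 2⁻ᵏ`. A tag is shared by at most two
subintervals of a division, so the exceptional errors sum to at most `2 ∑ₖ ε 2⁻ᵏ`.
-/

/-- A tagged division of the interval `[a,b]`: a finite increasing sequence of points
from `a` to `b` together with a tag in each subinterval. -/
structure HK.TaggedDivision (a b : ℝ) where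
  n : ℕ
  pts : ℕ → ℝ
  tags : ℕ → ℝ
  npos : 0 < n
  mono : ∀ i < n, pts i < pts (i + 1)
  left : pts 0 = a
  right : pts n = b
  tag_mem : ∀ i < n, tags i ∈ Set.Icc (pts i) (pts (i + 1))

/-- A tagged division is `δ`-fine for a gauge `δ` if each subinterval is contained in
the `δ(tag)`-neighbourhood of its tag. -/
def HK.TaggedDivision.IsFine {a b : ℝ} (δ : ℝ → ℝ) (P : HK.TaggedDivision a b) : Prop :=
  ∀ i < P.n, Set.Icc (P.pts i) (P.pts (i + 1)) ⊆
    Set.Icc (P.tags i - δ (P.tags i)) (P.tags i + δ (P.tags i))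

/-- The Riemann sum of `f` over a tagged division. -/
def HK.riemannSum {a b : ℝ} (f : ℝ → ℝ) (P : HK.TaggedDivision a b) : ℝ :=
  ∑ i ∈ Finset.range P.n, f (P.tags i) * (P.pts (i + 1) - P.pts i)

/-- `f` has Henstock–Kurzweil integral `I` on `[a,b]`. -/
def HK.HasIntegral (f : ℝ → ℝ) (a b I : ℝ) : Prop :=
  ∀ ε > (0 : ℝ), ∃ δ : ℝ → ℝ, (∀ x, 0 < δ x) ∧
    ∀ P : HK.TaggedDivision a b, P.IsFine δ → |HK.riemannSum f P - I| ≤ ε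

open Finset

theorem Finset.sum_comp_le_mul_tsum {ι β : Type*} [DecidableEq β] (s : Finset ι) (g : ι → β)
    {w : β → ℝ} (hw : ∀ k, 0 ≤ w k) (hsum : Summable w) {m : ℕ}
    (hm : ∀ k, #{i ∈ s | g i = k} ≤ m) :
    ∑ i ∈ s, w (g i) ≤ m * ∑' k, w k :=
  calc ∑ i ∈ s, w (g i) = ∑ k ∈ s.image g, #{i ∈ s | g i = k} • w k := Finset.sum_comp w g
    _ ≤ ∑ k ∈ s.image g, m * w k := by
        gcongr with k
        rw [nsmul_eq_mul]
        exact mul_le_mul_of_nonneg_right (by exact_mod_cast hm k) (hw k)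
    _ = m * ∑ k ∈ s.image g, w k := (Finset.mul_sum _ _ _).symm
    _ ≤ m * ∑' k, w k := by
        gcongr
        exact hsum.sum_le_tsum _ fun k _ => hw k

theorem HasDerivWithinAt.exists_abs_sub_le_mul {F : ℝ → ℝ} {f' x : ℝ} {s : Set ℝ}
    (h : HasDerivWithinAt F f' s x) {η : ℝ} (hη : 0 < η) :
    ∃ d > 0, ∀ u ∈ s, ∀ v ∈ s, x - d ≤ u → u ≤ x → x ≤ v → v ≤ x + d →
      |f' * (v - u) - (F v - F u)| ≤ η * (v - u) := by
  have hlin := Asymptotics.isLittleO_iff.mp (hasDerivWithinAt_iff_isLittleO.mp h) hη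
  obtain ⟨r, hr, hball⟩ := Metric.mem_nhdsWithin_iff.mp hlin
  have hnear : ∀ y ∈ s, |y - x| ≤ r / 2 → |F y - F x - f' * (y - x)| ≤ η * |y - x| := by
    intro y hy hyx
    have hmem : y ∈ Metric.ball x r ∩ s := ⟨by rw [Metric.mem_ball, Real.dist_eq]; linarith, hy⟩
    simpa only [Set.mem_ofPred_eq, Real.norm_eq_abs, smul_eq_mul, mul_comm f'] using hball hmem
  refine ⟨r / 2, by positivity, fun u hu v hv hdu hux hxv hvd => ?_⟩
  have hv' := hnear v hv (abs_le.mpr ⟨by linarith, by linarith⟩)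
  have hu' := hnear u hu (abs_le.mpr ⟨by linarith, by linarith⟩)
  rw [abs_of_nonneg (sub_nonneg.mpr hxv)] at hv'
  rw [abs_of_nonpos (sub_nonpos.mpr hux)] at hu'
  calc |f' * (v - u) - (F v - F u)|
      = |-(F v - F x - f' * (v - x)) + (F u - F x - f' * (u - x))| := by ring_nf
    _ ≤ |F v - F x - f' * (v - x)| + |F u - F x - f' * (u - x)| := by
        simpa only [abs_neg] using
          abs_add_le (-(F v - F x - f' * (v - x))) (F u - F x - f' * (u - x))
    _ ≤ η * (v - u) := by linarith

theorem ContinuousWithinAt.exists_abs_sub_le {F : ℝ → ℝ} {x : ℝ} {s : Set ℝ}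
    (h : ContinuousWithinAt F s x) (c : ℝ) {η : ℝ} (hη : 0 < η) :
    ∃ d > 0, ∀ u ∈ s, ∀ v ∈ s, x - d ≤ u → u ≤ x → x ≤ v → v ≤ x + d →
      |c * (v - u) - (F v - F u)| ≤ η := by
  obtain ⟨r, hr, hcont⟩ := Metric.continuousWithinAt_iff.mp h (η / 4) (by positivity)
  have hnear : ∀ y ∈ s, x - r / 2 ≤ y → y ≤ x + r / 2 → |F y - F x| ≤ η / 4 := by
    intro y hy hdy hyd
    have := hcont hy (by rw [Real.dist_eq, abs_lt]; constructor <;> linarith)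
    rw [Real.dist_eq] at this
    exact this.le
  set d := min (r / 2) (η / (4 * (|c| + 1)))
  have hdr : d ≤ r / 2 := min_le_left _ _
  have hcd : |c| * (2 * d) ≤ η / 2 := by
    calc |c| * (2 * d) ≤ (|c| + 1) * (2 * (η / (4 * (|c| + 1)))) := by
          gcongr
          · linarith
          · exact min_le_right _ _
      _ = η / 2 := by field_simp; ring
  refine ⟨d, by positivity, fun u hu v hv hdu hux hxv hvd => ?_⟩
  have hv' := hnear v hv (by linarith) (by linarith)
  have hu' := hnear u hu (by linarith) (by linarith)
  have hcuv : |c * (v - u)| ≤ η / 2 := by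
    rw [abs_mul, abs_of_nonneg (by linarith : 0 ≤ v - u)]
    exact (mul_le_mul_of_nonneg_left (by linarith) (abs_nonneg c)).trans hcd
  calc |c * (v - u) - (F v - F u)| = |c * (v - u) + (-(F v - F x) + (F u - F x))| := by ring_nf
    _ ≤ |c * (v - u)| + (|F v - F x| + |F u - F x|) := by
        refine (abs_add_le _ _).trans (add_le_add le_rfl ?_)
        simpa only [abs_neg] using abs_add_le (-(F v - F x)) (F u - F x)
    _ ≤ η := by linarith

namespace HK.TaggedDivision

variable {a b : ℝ} (P : TaggedDivision a b)

theorem pts_strictMonoOn : StrictMonoOn P.pts (Set.Iic P.n) :=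
  strictMonoOn_Iic_of_lt_succ P.mono

theorem pts_mem_Icc {i : ℕ} (hi : i ≤ P.n) : P.pts i ∈ Set.Icc a b := by
  refine ⟨?_, ?_⟩
  · calc a = P.pts 0 := P.left.symm
      _ ≤ P.pts i := P.pts_strictMonoOn.monotoneOn (Nat.zero_le _) hi (Nat.zero_le _)
  · calc P.pts i ≤ P.pts P.n := P.pts_strictMonoOn.monotoneOn hi (Set.mem_Iic.mpr le_rfl) hi
      _ = b := P.right

theorem sum_pts_sub : ∑ i ∈ range P.n, (P.pts (i + 1) - P.pts i) = b - a := by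
  rw [Finset.sum_range_sub, P.right, P.left]

theorem card_le_two_of_tags_eq {s : Finset ℕ} (hs : ∀ i ∈ s, i < P.n)
    (htags : ∀ i ∈ s, ∀ j ∈ s, P.tags i = P.tags j) : #s ≤ 2 := by
  rcases s.eq_empty_or_nonempty with rfl | hne
  · simp
  set m := s.min' hne
  have hm : m ∈ s := s.min'_mem hne
  have hsub : s ⊆ {m, m + 1} := by
    intro j hj
    have hmj : m ≤ j := s.min'_le j hj
    have hjm : j ≤ m + 1 := by
      by_contra! hlt
      have hpts := P.pts_strictMonoOn (hs m hm : m + 1 ≤ P.n) (hs j hj).le hlt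
      linarith [(P.tag_mem m (hs m hm)).2, (P.tag_mem j (hs j hj)).1, htags m hm j hj]
    simp only [mem_insert, mem_singleton]
    omega
  exact (card_le_card hsub).trans (card_insert_le _ _)

theorem IsFine.forall_subinterval {δ : ℝ → ℝ} {P : TaggedDivision a b} (hP : P.IsFine δ)
    {Q : ℝ → ℝ → ℝ → Prop}
    (hQ : ∀ x, ∀ u ∈ Set.Icc a b, ∀ v ∈ Set.Icc a b, x - δ x ≤ u → u ≤ x → x ≤ v → v ≤ x + δ x →
      Q u x v) :
    ∀ i < P.n, Q (P.pts i) (P.tags i) (P.pts (i + 1)) := by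
  intro i hi
  have hle := (P.mono i hi).le
  exact hQ _ _ (P.pts_mem_Icc hi.le) _ (P.pts_mem_Icc hi) (hP i hi ⟨le_rfl, hle⟩).1
    (P.tag_mem i hi).1 (P.tag_mem i hi).2 (hP i hi ⟨hle, le_rfl⟩).2

end HK.TaggedDivision

namespace HK

theorem abs_riemannSum_sub_le {a b : ℝ} (P : TaggedDivision a b) (F f : ℝ → ℝ)
    (T : Set ℝ) [DecidablePred (· ∈ T)] (K : ℝ → ℕ) (hK : Set.InjOn K T) {η : ℝ} (hη : 0 ≤ η)
    {w : ℕ → ℝ} (hw : ∀ k, 0 ≤ w k) (hsum : Summable w)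
    (hbound : ∀ i < P.n,
      |f (P.tags i) * (P.pts (i + 1) - P.pts i) - (F (P.pts (i + 1)) - F (P.pts i))| ≤
        if P.tags i ∈ T then w (K (P.tags i)) else η * (P.pts (i + 1) - P.pts i)) :
    |riemannSum f P - (F b - F a)| ≤ η * (b - a) + 2 * ∑' k, w k := by
  have hΔ : ∀ i ∈ range P.n, 0 ≤ P.pts (i + 1) - P.pts i :=
    fun i hi => sub_nonneg.mpr (P.mono i (mem_range.mp hi)).le
  have hfiber : ∀ k, #{i ∈ {i ∈ range P.n | P.tags i ∈ T} | K (P.tags i) = k} ≤ 2 := by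
    intro k
    refine P.card_le_two_of_tags_eq (fun i hi => ?_) (fun i hi j hj => ?_)
    · simp only [mem_filter, mem_range] at hi
      exact hi.1.1
    · simp only [mem_filter] at hi hj
      exact hK hi.1.2 hj.1.2 (hi.2.trans hj.2.symm)
  have hexc := Finset.sum_comp_le_mul_tsum {i ∈ range P.n | P.tags i ∈ T} (K ∘ P.tags) hw hsum
    hfiber
  have hreg :
      ∑ i ∈ range P.n with P.tags i ∉ T, η * (P.pts (i + 1) - P.pts i) ≤ η * (b - a) := by
    rw [← Finset.mul_sum, ← P.sum_pts_sub]
    exact mul_le_mul_of_nonneg_left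
      (sum_le_sum_of_subset_of_nonneg (filter_subset _ _) fun i hi _ => hΔ i hi) hη
  have htel : riemannSum f P - (F b - F a) = ∑ i ∈ range P.n,
      (f (P.tags i) * (P.pts (i + 1) - P.pts i) - (F (P.pts (i + 1)) - F (P.pts i))) := by
    rw [sum_sub_distrib, Finset.sum_range_sub (fun i => F (P.pts i)), P.right, P.left]
    rfl
  rw [htel]
  calc _ ≤ ∑ i ∈ range P.n, |f (P.tags i) * (P.pts (i + 1) - P.pts i) -
        (F (P.pts (i + 1)) - F (P.pts i))| := abs_sum_le_sum_abs _ _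
    _ ≤ ∑ i ∈ range P.n, if P.tags i ∈ T then w (K (P.tags i))
          else η * (P.pts (i + 1) - P.pts i) := sum_le_sum fun i hi => hbound i (mem_range.mp hi)
    _ ≤ η * (b - a) + 2 * ∑' k, w k := by
        rw [sum_ite]
        push_cast at hexc
        simp only [Function.comp_apply] at hexc
        linarith

end HK

/-- Fundamental theorem of calculus for the Henstock–Kurzweil integral with a countable
exceptional set: if `F` is continuous on `[a,b]` and `F' = f` off a countable set, then
`f` is HK-integrable on `[a,b]` with integral `F(b) - F(a)`. -/
theorem hk_ftc (a b : ℝ) (hab : a < b) (F f : ℝ → ℝ)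
    (hF : ContinuousOn F (Set.Icc a b))
    (S : Set ℝ) (hS : S.Countable)
    (hderiv : ∀ x ∈ Set.Icc a b \ S, HasDerivWithinAt F (f x) (Set.Icc a b) x) :
    HK.HasIntegral f a b (F b - F a) := by
  classical
  intro ε hε
  obtain ⟨K, hK⟩ := Set.countable_iff_exists_injOn.mp hS
  set η := ε / (2 * (b - a))
  set w : ℕ → ℝ := fun k => ε / 8 * (1 / 2) ^ k
  have hη : 0 < η := div_pos hε (by linarith)
  have hlocal : ∀ x, ∃ d > 0, ∀ u ∈ Set.Icc a b, ∀ v ∈ Set.Icc a b, x - d ≤ u → u ≤ x → x ≤ v →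
      v ≤ x + d → |f x * (v - u) - (F v - F u)| ≤ if x ∈ S then w (K x) else η * (v - u) := by
    intro x
    by_cases hx : x ∈ Set.Icc a b
    · by_cases hxS : x ∈ S
      · simpa only [if_pos hxS] using (hF x hx).exists_abs_sub_le (f x) (by positivity)
      · simpa only [if_neg hxS] using (hderiv x ⟨hx, hxS⟩).exists_abs_sub_le_mul hη
    · exact ⟨1, one_pos, fun u hu v hv _ hux hxv _ =>
        absurd ⟨hu.1.trans hux, hxv.trans hv.2⟩ hx⟩
  choose δ hδpos hδ using hlocal
  refine ⟨δ, hδpos, fun P hP => ?_⟩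
  have hw : HasSum w (ε / 4) := by
    have := hasSum_geometric_two.mul_left (ε / 8)
    rwa [show ε / 8 * 2 = ε / 4 by ring] at this
  have hηba : η * (b - a) = ε / 2 := by
    simp only [η]
    field_simp [(sub_pos.mpr hab).ne']
  calc |HK.riemannSum f P - (F b - F a)| ≤ η * (b - a) + 2 * ∑' k, w k :=
        HK.abs_riemannSum_sub_le P F f S K hK hη.le (fun k => by simp only [w]; positivity)
          hw.summable (hP.forall_subinterval hδ)
    _ = ε := by
        rw [hw.tsum_eq, hηba]
        ring
end
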